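/- arXiv:2501.08061 — 2 statements merged into one kernel-verified Lean document; each statement's English description precedes it below -/
import Mathlib

section
/- Weak duality v(P) ≥ v(D̄^F) holds if and only if K ∩ B ⊆ epi (f − g + δ_A)^c ∩ B, where K = ⋂_{(u*,v*,γ)∈dom g^c} ⋃_{(x*,y*,α)∈dom δ_A^c} { epi (f − c(·,(−x*,−y*,α)))^c − (u*,0,0, g^c(u*,v*,γ) − δ_A^c(x*,y*,α)) } and B = {(0,0)} × ℝ_{++} × ℝ. -/
/-!
On `B` the coupling vanishes, so `((0, 0, β), r)` lies in `epi (f - g + δ_A)^c` exactly when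
`-r ≤ v(P)`, and it lies in `K` exactly when every `w ∈ dom g^c` admits some `z` with
`-r ≤ g^c(w) - f^c(w₁ - z₁, -z₂, α) - δ_A^c(z)`. The `z` may be taken in `Z`: on `dom δ_A^c`,
raising the level `α` leaves `δ_A^c` unchanged and can only lower `f^c`. The inclusion thus says
that every real lower bound of `v(D̄^F)` of this attained kind is a lower bound of `v(P)`, and
approximating `v(D̄^F)` from below by reals shows that this is weak duality.
-/

noncomputable section
open Classical

/-- The space `W = X* × X* × ℝ` of the c-conjugation scheme. -/
abbrev W (X : Type*) [AddCommGroup X] [Module ℝ X] [TopologicalSpace X] : Type _ :=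
  (X →L[ℝ] ℝ) × (X →L[ℝ] ℝ) × ℝ

variable {X : Type*} [AddCommGroup X] [Module ℝ X] [TopologicalSpace X]

/-- The coupling function `c(x,(x*,y*,α)) = ⟨x,x*⟩` if `⟨x,y*⟩ < α`, `+∞` otherwise. -/
def cpl (x : X) (w : W X) : EReal :=
  if w.2.1 x < w.2.2 then ((w.1 x : ℝ) : EReal) else ⊤

/-- The c-conjugate `f^c(w) = sup_x { c(x,w) − f(x) }`. -/
def cConj (f : X → EReal) (w : W X) : EReal := ⨆ x : X, cpl x w - f x

/-- The c'-conjugate `h^{c'}(x) = sup_w { c'(w,x) − h(w) }`. -/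
def cpConj (h : W X → EReal) (x : X) : EReal := ⨆ w : W X, cpl x w - h w

/-- Subtraction with the DC convention `(+∞) − (+∞) = +∞`. -/
def dcSub (a b : EReal) : EReal := if a = ⊤ then ⊤ else a - b

/-- Indicator function `δ_A`. -/
def indic (A : Set X) (x : X) : EReal := if x ∈ A then (0 : EReal) else ⊤

/-- Epigraph of a function on `W`. -/
def epiW (h : W X → EReal) : Set (W X × ℝ) := {p | h p.1 ≤ (p.2 : EReal)}

/-- Effective domain. -/
def domE {α : Type*} (f : α → EReal) : Set α := {x | f x ≠ ⊤}

/-- The inner expression of the Fenchel-type dual problems. -/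
def dualExpr (f g : X → EReal) (A : Set X) (z w : W X) : EReal :=
  cConj g w - cConj f (w.1 - z.1, -z.2.1, z.2.2) - cConj (indic A) z

/-- The set `Z = X* × X* × ℝ_{++}`. -/
def Zset (X : Type*) [AddCommGroup X] [Module ℝ X] [TopologicalSpace X] : Set (W X) :=
  {z | 0 < z.2.2}

/-- Primal optimal value `v(P) = inf_X { f − g + δ_A }`. -/
def vP (f g : X → EReal) (A : Set X) : EReal := ⨅ x : X, dcSub (f x) (g x) + indic A x

/-- Dual optimal value `v(D^F)`. -/
def vDF (f g : X → EReal) (A : Set X) : EReal :=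
  ⨆ z ∈ Zset X, ⨅ w ∈ domE (cConj g), dualExpr f g A z w

/-- Dual optimal value `v(D̄^F)`. -/
def vDbarF (f g : X → EReal) (A : Set X) : EReal :=
  ⨅ w ∈ domE (cConj g), ⨆ z ∈ Zset X, dualExpr f g A z w

/-- The set `Ω`. -/
def OmegaSet (f g : X → EReal) (A : Set X) : Set (W X × ℝ) :=
  ⋃ z ∈ domE (cConj (indic A)), ⋂ w ∈ domE (cConj g),
    (fun p : W X × ℝ =>
        p - ((w.1, 0, 0), (cConj g w).toReal - (cConj (indic A) z).toReal)) ''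
      epiW (cConj (fun x => dcSub (f x) (cpl x (-z.1, -z.2.1, z.2.2))))

/-- The set `K`. -/
def Kset (f g : X → EReal) (A : Set X) : Set (W X × ℝ) :=
  ⋂ w ∈ domE (cConj g), ⋃ z ∈ domE (cConj (indic A)),
    (fun p : W X × ℝ =>
        p - ((w.1, 0, 0), (cConj g w).toReal - (cConj (indic A) z).toReal)) ''
      epiW (cConj (fun x => dcSub (f x) (cpl x (-z.1, -z.2.1, z.2.2))))

/-- The set `B = {(0,0)} × ℝ_{++} × ℝ`. -/
def Bset (X : Type*) [AddCommGroup X] [Module ℝ X] [TopologicalSpace X] :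
    Set (W X × ℝ) :=
  {p | p.1.1 = 0 ∧ p.1.2.1 = 0 ∧ 0 < p.1.2.2}

/-- Properness of an extended-real-valued function. -/
def ProperFn {α : Type*} (f : α → EReal) : Prop := (∀ x, f x ≠ ⊥) ∧ ∃ x, f x ≠ ⊤

/-- Convexity of an extended-real-valued function via its epigraph. -/
def ConvexFn (f : X → EReal) : Prop := Convex ℝ {p : X × ℝ | f p.1 ≤ (p.2 : EReal)}

/-- Evenly convex set. -/
def EvenlyConvexSet {Y : Type*} [AddCommGroup Y] [Module ℝ Y] [TopologicalSpace Y]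
    (C : Set Y) : Prop :=
  ∀ y0 ∉ C, ∃ φ : Y →L[ℝ] ℝ, ∀ y ∈ C, φ (y - y0) < 0

/-- Evenly convex function: its epigraph is an evenly convex subset of `X × ℝ`. -/
def EConvexFn (f : X → EReal) : Prop :=
  EvenlyConvexSet {p : X × ℝ | f p.1 ≤ (p.2 : EReal)}

theorem EReal.iInf₂_iSup₂_le_iff {ι κ : Type*} (S : Set ι) (Z : Set κ) (E : κ → ι → EReal)
    (b : EReal) :
    ⨅ w ∈ S, ⨆ z ∈ Z, E z w ≤ b ↔
      ∀ t : ℝ, (∀ w ∈ S, ∃ z ∈ Z, (t : EReal) ≤ E z w) → (t : EReal) ≤ b := by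
  constructor
  · intro h t ht
    refine le_trans (le_iInf₂ fun w hw => ?_) h
    obtain ⟨z, hz, htz⟩ := ht w hw
    exact htz.trans (le_iSup₂ (f := fun z _ => E z w) z hz)
  · intro h
    by_contra! hlt
    obtain ⟨t, hbt, htS⟩ := EReal.exists_between_coe_real hlt
    refine (h t fun w hw => ?_).not_gt hbt
    obtain ⟨z, hz, htz⟩ := lt_biSup_iff.mp (htS.trans_le (iInf₂_le w hw))
    exact ⟨z, hz, htz.le⟩

theorem EReal.le_coe_sub_sub_iff (a : EReal) (c d s : ℝ) :
    a ≤ ((c - d - s : ℝ) : EReal) ↔ (s : EReal) ≤ c - a - d := by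
  induction a using EReal.rec with
  | bot => simp
  | coe t =>
    norm_cast
    constructor <;> intro <;> linarith
  | top => simp [-EReal.coe_sub]

theorem cConj_ne_bot {f : X → EReal} (hf : ∃ x, f x ≠ ⊤) (w : W X) : cConj f w ≠ ⊥ := by
  obtain ⟨x, hx⟩ := hf
  refine ne_bot_of_le_ne_bot ?_ (le_iSup (fun x => cpl x w - f x) x)
  rw [sub_eq_add_neg, Ne, EReal.add_eq_bot_iff, EReal.neg_eq_bot_iff]
  unfold cpl
  split_ifs <;> simp [hx]

theorem cpl_mk_zero (x : X) (u : X →L[ℝ] ℝ) {β : ℝ} (hβ : 0 < β) :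
    cpl x (u, 0, β) = u x := by
  simp [cpl, hβ]

theorem cpl_sub_dcSub_cpl (x : X) (u : X →L[ℝ] ℝ) {β : ℝ} (hβ : 0 < β) (z : W X) (a : EReal) :
    cpl x (u, 0, β) - dcSub a (cpl x (-z.1, -z.2.1, z.2.2)) =
      cpl x (u - z.1, -z.2.1, z.2.2) - a := by
  rw [cpl_mk_zero x u hβ]
  unfold cpl dcSub
  split_ifs <;> induction a using EReal.rec <;> simp_all [← EReal.coe_sub]
  norm_cast
  ring

theorem cConj_dcSub_cpl (f : X → EReal) (z : W X) (u : X →L[ℝ] ℝ) {β : ℝ} (hβ : 0 < β) :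
    cConj (fun x => dcSub (f x) (cpl x (-z.1, -z.2.1, z.2.2))) (u, 0, β) =
      cConj f (u - z.1, -z.2.1, z.2.2) :=
  iSup_congr fun x => cpl_sub_dcSub_cpl x u hβ z (f x)

theorem cConj_antitone_level (f : X → EReal) (u y : X →L[ℝ] ℝ) {α α' : ℝ} (h : α ≤ α') :
    cConj f (u, y, α') ≤ cConj f (u, y, α) := by
  refine iSup_mono fun x => EReal.sub_le_sub ?_ le_rfl
  unfold cpl
  split_ifs with h' h'' h''
  · exact le_rfl
  · exact le_top
  · exact absurd (h''.trans_le h) h'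
  · exact le_rfl

theorem cConj_indic_level_of_le {A : Set X} {z : W X} (hz : z ∈ domE (cConj (indic A)))
    {α : ℝ} (hα : z.2.2 ≤ α) : cConj (indic A) (z.1, z.2.1, α) = cConj (indic A) z := by
  have hlt : ∀ x ∈ A, z.2.1 x < z.2.2 := by
    intro x hx
    by_contra hge
    have hle := le_iSup (fun y => cpl y z - indic A y) x
    rw [indic, if_pos hx, sub_zero, cpl, if_neg hge] at hle
    exact hz (top_le_iff.mp hle)
  refine iSup_congr fun x => ?_
  by_cases hx : x ∈ A
  · simp [cpl, hlt x hx, (hlt x hx).trans_le hα]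
  · simp [indic, hx]

theorem dualExpr_le_dualExpr_level {f g : X → EReal} {A : Set X} {z : W X}
    (hz : z ∈ domE (cConj (indic A))) (w : W X) {α : ℝ} (hα : z.2.2 ≤ α) :
    dualExpr f g A z w ≤ dualExpr f g A (z.1, z.2.1, α) w := by
  rw [dualExpr, dualExpr, cConj_indic_level_of_le hz hα]
  exact EReal.sub_le_sub (EReal.sub_le_sub le_rfl (cConj_antitone_level f _ _ hα)) le_rfl

theorem exists_domE_le_dualExpr_iff (f g : X → EReal) (A : Set X) (w : W X) (t : ℝ) :
    (∃ z ∈ domE (cConj (indic A)), (t : EReal) ≤ dualExpr f g A z w) ↔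
      ∃ z ∈ Zset X, (t : EReal) ≤ dualExpr f g A z w := by
  constructor
  · rintro ⟨z, hz, htz⟩
    have hpos : (0 : ℝ) < max z.2.2 1 := lt_max_of_lt_right one_pos
    exact ⟨(z.1, z.2.1, max z.2.2 1), hpos,
      htz.trans (dualExpr_le_dualExpr_level hz w (le_max_left _ _))⟩
  · rintro ⟨z, -, htz⟩
    refine ⟨z, fun htop => ?_, htz⟩
    rw [dualExpr, htop, EReal.sub_top] at htz
    exact EReal.coe_ne_bot t (le_bot_iff.mp htz)

theorem mem_epiW_cConj_iff (φ : X → EReal) {β : ℝ} (hβ : 0 < β) (r : ℝ) :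
    (((0, 0, β), r) : W X × ℝ) ∈ epiW (cConj φ) ↔ ((-r : ℝ) : EReal) ≤ ⨅ x, φ x := by
  simp only [epiW, Set.mem_ofPred_eq, cConj, cpl_mk_zero _ _ hβ, iSup_le_iff, le_iInf_iff]
  refine forall_congr' fun x => ?_
  rw [zero_apply, EReal.coe_zero, zero_sub, EReal.neg_le, EReal.coe_neg]

theorem mem_Kset_iff {f g : X → EReal} {A : Set X} (hA : A.Nonempty) (hg : ∃ x, g x ≠ ⊤)
    {β : ℝ} (hβ : 0 < β) (r : ℝ) :
    (((0, 0, β), r) : W X × ℝ) ∈ Kset f g A ↔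
      ∀ w ∈ domE (cConj g), ∃ z ∈ Zset X, ((-r : ℝ) : EReal) ≤ dualExpr f g A z w := by
  have hA' : ∃ x, indic A x ≠ ⊤ := hA.imp fun x hx => by simp [indic, hx]
  simp only [Kset, Set.mem_iInter₂, Set.mem_iUnion₂, exists_prop]
  refine forall₂_congr fun w hw => ?_
  rw [← exists_domE_le_dualExpr_iff]
  refine exists_congr fun z => and_congr_right fun hz => ?_
  rw [Set.image_sub_right, Set.mem_preimage, epiW, Set.mem_ofPred_eq]
  simp only [Prod.mk_add_mk, zero_add, add_zero]
  rw [cConj_dcSub_cpl f z w.1 hβ, dualExpr]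
  -- `Kset` shifts by `toReal`s, which is faithful only because `g^c(w)` and `δ_A^c(z)` are finite.
  lift cConj g w to ℝ using ⟨hw, cConj_ne_bot hg w⟩ with cw
  lift cConj (indic A) z to ℝ using ⟨hz, cConj_ne_bot hA' z⟩ with dz
  rw [EReal.toReal_coe, EReal.toReal_coe, ← EReal.le_coe_sub_sub_iff, sub_neg_eq_add, add_comm]

theorem prop41_ii_general
    {X : Type*} [AddCommGroup X] [Module ℝ X] [TopologicalSpace X]
    (f g : X → EReal) (A : Set X) (hA : A.Nonempty)
    (hg : ProperFn g) :
    vDbarF f g A ≤ vP f g A ↔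
      Kset f g A ∩ Bset X ⊆
        epiW (cConj (fun x => dcSub (f x) (g x) + indic A x)) ∩ Bset X := by
  rw [vDbarF, EReal.iInf₂_iSup₂_le_iff]
  constructor
  · rintro hwd ⟨⟨u, v, β⟩, r⟩ ⟨hK, rfl, rfl, hβ⟩
    refine ⟨(mem_epiW_cConj_iff _ hβ r).2 ?_, rfl, rfl, hβ⟩
    exact hwd _ ((mem_Kset_iff hA hg.2 hβ r).1 hK)
  · intro hincl t ht
    have hK : (((0, 0, 1), -t) : W X × ℝ) ∈ Kset f g A :=
      (mem_Kset_iff hA hg.2 one_pos (-t)).2 (by simpa using ht)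
    have hepi := (mem_epiW_cConj_iff _ one_pos (-t)).1 (hincl ⟨hK, rfl, rfl, one_pos⟩).1
    rwa [neg_neg] at hepi

/-- Proposition 4.1(ii): weak duality `v(P) ≥ v(D̄^F)` holds iff
`K ∩ B ⊆ epi (f−g+δ_A)^c ∩ B`. -/
theorem prop41_ii
    {X : Type*} [AddCommGroup X] [Module ℝ X] [TopologicalSpace X]
    (f g : X → EReal) (A : Set X) (hA : A.Nonempty)
    (hf : ProperFn f) (hfc : ConvexFn f) (hg : ProperFn g) (hgc : ConvexFn g)
    (hdom : domE f ⊆ domE g) :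
    vDbarF f g A ≤ vP f g A ↔
      Kset f g A ∩ Bset X ⊆
        epiW (cConj (fun x => dcSub (f x) (g x) + indic A x)) ∩ Bset X :=
  prop41_ii_general f g A hA hg

end
end

section
/- With Λ = ⋂_{(u*,v*,γ)∈dom g^c} { epi (f + δ_A)^c − (u*, 0, 0, g^c(u*,v*,γ)) }, it holds that Λ = epi ( f − eco g + δ_A )^c, where eco g is the evenly convex hull of g (the largest e-convex minorant, equal to g^{cc'}). -/
noncomputable section
open Classical

variable {X : Type*} [AddCommGroup X] [Module ℝ X] [TopologicalSpace X]

/-- The set `Λ = ⋂_{(u*,v*,γ) ∈ dom g^c} { epi (f+δ_A)^c − (u*,0,0,g^c(u*,v*,γ)) }`. -/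
def LambdaSet {X : Type*} [AddCommGroup X] [Module ℝ X] [TopologicalSpace X]
    (f g : X → EReal) (A : Set X) : Set (W X × ℝ) :=
  ⋂ w ∈ domE (cConj g),
    (fun p : W X × ℝ => p - ((w.1, 0, 0), (cConj g w).toReal)) ''
      epiW (cConj (fun x => f x + indic A x))

section AuxLemmas

variable {X : Type*} [AddCommGroup X] [Module ℝ X] [TopologicalSpace X]

lemma ereal_top_sub {a : EReal} (h : a ≠ ⊤) : (⊤ : EReal) - a = ⊤ := by
  induction a using EReal.rec with
  | bot => exact EReal.top_sub_bot
  | coe r => exact EReal.top_sub_coe r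
  | top => exact absurd rfl h

lemma ereal_sub_ne_bot {a b : EReal} (ha : a ≠ ⊥) (hb : b ≠ ⊤) : a - b ≠ ⊥ := by
  intro h
  rw [sub_eq_add_neg, EReal.add_eq_bot_iff] at h
  rcases h with h | h
  · exact ha h
  · exact hb (EReal.neg_eq_bot_iff.1 h)

lemma cpl_ne_bot (x : X) (w : W X) : cpl x w ≠ ⊥ := by
  unfold cpl; split <;> simp

lemma cpl_eq_of_ne_top {x : X} {w : W X} (h : cpl x w ≠ ⊤) :
    cpl x w = ((w.1 x : ℝ) : EReal) := by
  by_cases hc : w.2.1 x < w.2.2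
  · unfold cpl; rw [if_pos hc]
  · exact absurd (by unfold cpl; rw [if_neg hc]) h

lemma cpl_add (x : X) (q : W X) (u : X →L[ℝ] ℝ) :
    cpl x (q + (u, 0, 0)) = if q.2.1 x < q.2.2 then ((q.1 x + u x : ℝ) : EReal) else ⊤ := by
  unfold cpl
  simp only [Prod.fst_add, Prod.snd_add, add_zero, ContinuousLinearMap.add_apply,
    ContinuousLinearMap.zero_apply, EReal.coe_add]

lemma gconj_ne_bot {g : X → EReal} (hg : ProperFn g) (w : W X) : cConj g w ≠ ⊥ := by
  obtain ⟨x0, hx0⟩ := hg.2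
  have hb : cpl x0 w - g x0 ≠ ⊥ := ereal_sub_ne_bot (cpl_ne_bot x0 w) hx0
  intro h
  exact hb (le_bot_iff.1 (h ▸ le_iSup (fun x => cpl x w - g x) x0))

lemma cpl_ne_top {g : X → EReal} {x : X} {w : W X} (hgx : g x ≠ ⊤)
    (hw : cConj g w ≠ ⊤) : cpl x w ≠ ⊤ := by
  intro h
  apply hw
  apply top_le_iff.mp
  calc (⊤ : EReal) = cpl x w - g x := by rw [h, ereal_top_sub hgx]
    _ ≤ cConj g w := le_iSup (fun x => cpl x w - g x) x

lemma eco_le {g : X → EReal} (hg : ProperFn g) (x : X) : cpConj (cConj g) x ≤ g x := by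
  apply iSup_le
  intro w
  rcases eq_or_ne (g x) ⊤ with hgx | hgx
  · exact hgx ▸ le_top
  rcases eq_or_ne (cConj g w) ⊤ with hw | hw
  · rw [hw, EReal.sub_top]; exact bot_le
  have hcw : cpl x w ≠ ⊤ := cpl_ne_top hgx hw
  have hGb := gconj_ne_bot hg w
  have hG := EReal.coe_toReal hw hGb
  have hX := EReal.coe_toReal hgx (hg.1 x)
  have hfen : cpl x w - g x ≤ cConj g w := le_iSup (fun x => cpl x w - g x) x
  rw [cpl_eq_of_ne_top hcw, ← hX, ← EReal.coe_sub, ← hG, EReal.coe_le_coe_iff] at hfen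
  rw [cpl_eq_of_ne_top hcw, ← hG, ← EReal.coe_sub, ← hX, EReal.coe_le_coe_iff]
  linarith

lemma mem_sub_image {G : Type*} [AddGroup G] {S : Set G} {c a : G} :
    a ∈ (fun p => p - c) '' S ↔ a + c ∈ S := by
  constructor
  · rintro ⟨p, hp, rfl⟩; simpa using hp
  · intro h; exact ⟨a + c, h, by simp⟩

end AuxLemmas

/-- Proposition 5.3(i): `Λ = epi (f − eco g + δ_A)^c`, where `eco g = g^{cc'}`. -/
theorem prop53_i
    {X : Type*} [AddCommGroup X] [Module ℝ X] [TopologicalSpace X]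
    (f g : X → EReal) (A : Set X) (hA : A.Nonempty)
    (hf : ProperFn f) (hfc : ConvexFn f) (hg : ProperFn g) (hgc : ConvexFn g)
    (hdom : domE f ⊆ domE g) :
    LambdaSet f g A =
      epiW (cConj (fun x => dcSub (f x) (cpConj (cConj g) x) + indic A x)) := by
  ext ⟨q, t⟩
  have hL : (q, t) ∈ LambdaSet f g A ↔
      ∀ w : W X, cConj g w ≠ ⊤ → ∀ x : X,
        cpl x (q + (w.1, 0, 0)) - (f x + indic A x)
          ≤ ((t + (cConj g w).toReal : ℝ) : EReal) := by
    simp only [LambdaSet, Set.mem_iInter, domE, Set.mem_setOf_eq]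
    constructor
    · intro h w hw x
      have h1 := h w hw
      rw [mem_sub_image] at h1
      exact le_trans (le_iSup (fun x => cpl x (q + (w.1, 0, 0)) - (f x + indic A x)) x) h1
    · intro h w hw
      rw [mem_sub_image]
      exact iSup_le (h w hw)
  have hR : (q, t) ∈ epiW (cConj (fun x => dcSub (f x) (cpConj (cConj g) x) + indic A x)) ↔
      ∀ x : X,
        cpl x q - (dcSub (f x) (cpConj (cConj g) x) + indic A x) ≤ ((t : ℝ) : EReal) := by
    constructor
    · intro h x
      exact le_trans
        (le_iSup (fun x => cpl x q - (dcSub (f x) (cpConj (cConj g) x) + indic A x)) x) h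
    · exact fun h => iSup_le h
  rw [hL, hR]
  by_cases hdg : ∃ w0 : W X, cConj g w0 ≠ ⊤
  case neg =>
    push_neg at hdg
    constructor
    · intro _ x
      have hE : cpConj (cConj g) x = ⊥ := by
        unfold cpConj
        simp [hdg, EReal.sub_top]
      have hD : dcSub (f x) (cpConj (cConj g) x) = ⊤ := by
        rw [dcSub, hE]
        split
        · rfl
        · exact EReal.sub_bot (hf.1 x)
      have hiT : dcSub (f x) (cpConj (cConj g) x) + indic A x = ⊤ := by
        rw [hD, indic]
        split
        · exact add_zero _
        · exact EReal.top_add_top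
      rw [hiT, EReal.sub_top]
      exact bot_le
    · intro _ w hw
      exact absurd (hdg w) hw
  case pos =>
    obtain ⟨w0, hw0⟩ := hdg
    constructor
    · -- forward
      intro h x
      by_cases hxA : x ∈ A
      swap
      · have hiT : dcSub (f x) (cpConj (cConj g) x) + indic A x = ⊤ := by
          rw [indic, if_neg hxA]
          apply EReal.add_top_of_ne_bot
          rw [dcSub]
          split
          · exact top_ne_bot
          · rename_i hfx
            have hgx : g x ≠ ⊤ := hdom hfx
            have hEtop : cpConj (cConj g) x ≠ ⊤ :=
              fun hh => hgx (top_le_iff.1 (hh ▸ eco_le hg x))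
            exact ereal_sub_ne_bot (hf.1 x) hEtop
        rw [hiT, EReal.sub_top]
        exact bot_le
      · have hind : indic A x = 0 := if_pos hxA
        rcases eq_or_ne (f x) ⊤ with hfx | hfx
        · rw [hind, add_zero, dcSub, if_pos hfx, EReal.sub_top]
          exact bot_le
        · have hfb : f x ≠ ⊥ := hf.1 x
          have hgx : g x ≠ ⊤ := hdom hfx
          have hEtop : cpConj (cConj g) x ≠ ⊤ :=
            fun hh => hgx (top_le_iff.1 (hh ▸ eco_le hg x))
          have hEbot : cpConj (cConj g) x ≠ ⊥ := by
            intro hh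
            have h1 : cpl x w0 - cConj g w0 ≤ cpConj (cConj g) x :=
              le_iSup (fun w => cpl x w - cConj g w) w0
            rw [hh, le_bot_iff] at h1
            exact ereal_sub_ne_bot (cpl_ne_bot x w0) hw0 h1
          rcases eq_or_ne (cpl x q) ⊤ with hcq | hcq
          · exfalso
            have hcond' : ¬ q.2.1 x < q.2.2 := by
              intro hc
              have : cpl x q = ((q.1 x : ℝ) : EReal) := by unfold cpl; rw [if_pos hc]
              exact EReal.coe_ne_top _ (this ▸ hcq)
            have h1 := h w0 hw0 x
            rw [cpl_add, if_neg hcond', hind, add_zero, ereal_top_sub hfx] at h1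
            exact EReal.coe_ne_top _ (top_le_iff.1 h1)
          · have hcond : q.2.1 x < q.2.2 := by
              by_contra hc
              exact hcq (by unfold cpl; rw [if_neg hc])
            have hcq' : cpl x q = ((q.1 x : ℝ) : EReal) := by unfold cpl; rw [if_pos hcond]
            have hE := EReal.coe_toReal hEtop hEbot
            have hF := EReal.coe_toReal hfx hfb
            have hbound : cpConj (cConj g) x ≤
                ((t - q.1 x + (f x).toReal : ℝ) : EReal) := by
              apply iSup_le
              intro w
              rcases eq_or_ne (cConj g w) ⊤ with hw | hw
              · rw [hw, EReal.sub_top]; exact bot_le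
              · have h1 := h w hw x
                rw [cpl_add, if_pos hcond, hind, add_zero] at h1
                have hcw : cpl x w ≠ ⊤ := cpl_ne_top hgx hw
                have hGb := gconj_ne_bot hg w
                have hG := EReal.coe_toReal hw hGb
                rw [← hF, ← EReal.coe_sub, EReal.coe_le_coe_iff] at h1
                rw [cpl_eq_of_ne_top hcw, ← hG, ← EReal.coe_sub, EReal.coe_le_coe_iff]
                linarith
            rw [← hE, EReal.coe_le_coe_iff] at hbound
            rw [hind, add_zero, dcSub, if_neg hfx, hcq', ← hE, ← hF, ← EReal.coe_sub,
              ← EReal.coe_sub, EReal.coe_le_coe_iff]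
            linarith
    · -- backward
      intro h w hw x
      rcases eq_or_ne (f x + indic A x) ⊤ with hfi | hfi
      · rw [hfi, EReal.sub_top]
        exact bot_le
      · have hxA : x ∈ A := by
          by_contra hxA
          apply hfi
          rw [indic, if_neg hxA]
          exact EReal.add_top_of_ne_bot (hf.1 x)
        have hind : indic A x = 0 := if_pos hxA
        have hfx : f x ≠ ⊤ := by rw [hind, add_zero] at hfi; exact hfi
        have hfb : f x ≠ ⊥ := hf.1 x
        have hgx : g x ≠ ⊤ := hdom hfx
        have hEtop : cpConj (cConj g) x ≠ ⊤ :=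
          fun hh => hgx (top_le_iff.1 (hh ▸ eco_le hg x))
        have hcw : cpl x w ≠ ⊤ := cpl_ne_top hgx hw
        have hEbot : cpConj (cConj g) x ≠ ⊥ := by
          intro hh
          have h1 : cpl x w - cConj g w ≤ cpConj (cConj g) x :=
            le_iSup (fun w => cpl x w - cConj g w) w
          rw [hh, le_bot_iff] at h1
          exact ereal_sub_ne_bot (cpl_ne_bot x w) hw h1
        have hGb := gconj_ne_bot hg w
        have hG := EReal.coe_toReal hw hGb
        have hE := EReal.coe_toReal hEtop hEbot
        have hF := EReal.coe_toReal hfx hfb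
        have h1 := h x
        rw [hind, add_zero, dcSub, if_neg hfx] at h1
        rcases eq_or_ne (cpl x q) ⊤ with hcq | hcq
        · exfalso
          rw [hcq, ereal_top_sub (a := f x - cpConj (cConj g) x)
            (by rw [← hF, ← hE, ← EReal.coe_sub]; exact EReal.coe_ne_top _)] at h1
          exact EReal.coe_ne_top _ (top_le_iff.1 h1)
        · have hcond : q.2.1 x < q.2.2 := by
            by_contra hc
            exact hcq (by unfold cpl; rw [if_neg hc])
          have hcq' : cpl x q = ((q.1 x : ℝ) : EReal) := by unfold cpl; rw [if_pos hcond]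
          have hfen : cpl x w - cConj g w ≤ cpConj (cConj g) x :=
            le_iSup (fun w => cpl x w - cConj g w) w
          rw [cpl_eq_of_ne_top hcw, ← hG, ← EReal.coe_sub, ← hE,
            EReal.coe_le_coe_iff] at hfen
          rw [hcq', ← hF, ← hE, ← EReal.coe_sub, ← EReal.coe_sub,
            EReal.coe_le_coe_iff] at h1
          rw [hind, add_zero, cpl_add, if_pos hcond, ← hF, ← EReal.coe_sub,
            EReal.coe_le_coe_iff]
          linarith
end
end
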